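/- arXiv:1710.07785 — 3 statements merged into one kernel-verified Lean document; each statement's English description precedes it below -/
import Mathlib

section
/- Let C be a skew α-constacyclic code of length n over R with respect to an automorphism θ_t of order k, where α is a unit fixed by θ_t satisfying α² = 1. If gcd(n,k) = 1, then C is (classically) α-constacyclic: for every (c₀,...,c_{n-1}) ∈ C, also (αc_{n-1}, c₀, ..., c_{n-2}) ∈ C. -/
/-- The standard form `a + u*b + v*c + u*v*d` of an element of
`R = F_q + uF_q + vF_q + uvF_q`. -/
def stdForm (F R : Type*) [Field F] [CommRing R] [Algebra F R] (u v : R)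
    (x : F × F × F × F) : R :=
  algebraMap F R x.1 + u * algebraMap F R x.2.1 + v * algebraMap F R x.2.2.1
    + u * v * algebraMap F R x.2.2.2

/-- The skew `α`-constacyclic shift `τ_α` with respect to `θ`. -/
def skewConstaShift {R : Type*} [Mul R] [One R] [DecidableEq R] (θ : R → R) (α : R)
    {n : ℕ} [NeZero n] (x : Fin n → R) : Fin n → R :=
  fun i => (if i = 0 then α else 1) * θ (x (i - 1))

/-!
Since `θ` acts as a Frobenius power on the coordinates, it is multiplicative; as it fixes `α`,
the skew shift `τ_α` factors as the classical `α`-constacyclic shift `σ` composed with `θ`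
applied coordinatewise, and the two commute. Hence `τ_α^N = σ^N ∘ θ^N`, while `σ^n` is
multiplication by `α`. As `gcd(n, k) = 1` there is `q` with `k ∣ qn + 1`; then `θ^(qn+1) = id`,
so `τ_α^(qn+1) = α^q • σ`, and `α^(2q) = 1` gives `σ(c) = α^q • τ_α^(qn+1)(c) ∈ C`.
-/

section StdForm

variable {F R : Type*} [Field F] [CommRing R] [Algebra F R] {u v : R}

lemma stdForm_mul (hu : u * u = u) (hv : v * v = v) (a b c d a' b' c' d' : F) :
    stdForm F R u v (a, b, c, d) * stdForm F R u v (a', b', c', d') =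
    stdForm F R u v (a * a', a * b' + b * a' + b * b', a * c' + c * a' + c * c',
      a * d' + d * a' + b * c' + c * b' + b * d' + d * b' + c * d' + d * c' + d * d') := by
  simp only [stdForm, map_add, map_mul]
  linear_combination (algebraMap F R b * algebraMap F R b'
      + v * (algebraMap F R b * algebraMap F R d' + algebraMap F R d * algebraMap F R b')
      + v ^ 2 * (algebraMap F R d * algebraMap F R d')) * hu
    + (algebraMap F R c * algebraMap F R c'
      + u * (algebraMap F R c * algebraMap F R d' + algebraMap F R d * algebraMap F R c')
      + u * (algebraMap F R d * algebraMap F R d')) * hv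

/-- The product formula of `stdForm_mul` has integer coefficients, so it is preserved by
any ring endomorphism of `F` applied to the coordinates. -/
lemma map_mul_of_stdForm (hu : u * u = u) (hv : v * v = v)
    (hsurj : Function.Surjective (stdForm F R u v)) (φ : F →+* F) {θ : R → R}
    (hθ : ∀ a b c d : F, θ (stdForm F R u v (a, b, c, d)) =
      stdForm F R u v (φ a, φ b, φ c, φ d)) (x y : R) :
    θ (x * y) = θ x * θ y := by
  obtain ⟨⟨a, b, c, d⟩, rfl⟩ := hsurj x
  obtain ⟨⟨a', b', c', d'⟩, rfl⟩ := hsurj y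
  simp only [stdForm_mul hu hv, hθ, map_add, map_mul]

end StdForm

lemma Fin.val_zero_sub_one {n : ℕ} [NeZero n] : ((0 : Fin n) - 1).val = n - 1 := by
  obtain ⟨m, rfl⟩ := Nat.exists_eq_succ_of_ne_zero (NeZero.ne n)
  simp [Fin.coe_neg_one]

lemma Nat.exists_dvd_mul_add_one_of_coprime {n k : ℕ} (hk : 0 < k) (h : n.Coprime k) :
    ∃ q, k ∣ q * n + 1 := by
  have : NeZero k := ⟨hk.ne'⟩
  refine ⟨(-(n : ZMod k)⁻¹).val, ?_⟩
  rw [← ZMod.natCast_eq_zero_iff]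
  push_cast
  rw [ZMod.natCast_zmod_val, neg_mul, ZMod.inv_mul_of_unit _ ((ZMod.isUnit_iff_coprime n k).2 h)]
  ring

section ConstaShift

variable {R : Type*} [CommRing R] [DecidableEq R] {n : ℕ} [NeZero n]

lemma skewConstaShift_eq_comp (θ : R → R) (α : R) :
    skewConstaShift θ α = skewConstaShift id α ∘ Pi.map (fun (_ : Fin n) => θ) := rfl

lemma commute_skewConstaShift_id_piMap {θ : R → R} {α : R}
    (hθα : ∀ x, θ (α * x) = α * θ x) :
    Function.Commute (skewConstaShift id α) (Pi.map (fun (_ : Fin n) => θ)) := by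
  intro c
  funext i
  simp only [skewConstaShift, Pi.map_apply, id]
  split_ifs
  · exact (hθα _).symm
  · rw [one_mul, one_mul]

lemma skewConstaShift_id_smul (α a : R) (c : Fin n → R) :
    skewConstaShift id α (a • c) = a • skewConstaShift id α c := by
  funext i
  simp only [skewConstaShift, Pi.smul_apply, smul_eq_mul, id]
  ring

open Fin.NatCast in
lemma iterate_skewConstaShift_id_apply (α : R) {j : ℕ} (hj : j ≤ n) (c : Fin n → R)
    (i : Fin n) :
    (skewConstaShift id α)^[j] c i = (if i.val < j then α else 1) * c (i - j) := by
  induction j generalizing i with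
  | zero => simp
  | succ j ih =>
    have hidx : i - 1 - (j : Fin n) = i - ((j + 1 : ℕ) : Fin n) := by push_cast; abel
    have hlt : (i - 1).val < j ↔ i.val < j + 1 ∧ i ≠ 0 := by
      rcases eq_or_ne i 0 with rfl | hi
      · simp only [Fin.val_zero_sub_one]; omega
      · have := Fin.val_sub_one_of_ne_zero hi
        have := Fin.val_ne_zero_iff.mpr hi
        omega
    rw [Function.iterate_succ_apply']
    simp only [skewConstaShift, id, ih (by omega), hidx, hlt]
    by_cases hi : i = 0 <;> simp [hi]

lemma iterate_skewConstaShift_id_mul (α : R) (q : ℕ) (c : Fin n → R) :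
    (skewConstaShift id α)^[q * n] c = α ^ q • c := by
  have hn (c : Fin n → R) : (skewConstaShift id α)^[n] c = α • c := by
    funext i
    simp [iterate_skewConstaShift_id_apply α le_rfl c i]
  induction q generalizing c with
  | zero => simp
  | succ q ih =>
    rw [add_mul, one_mul, Function.iterate_add_apply, hn, ih, smul_smul, pow_succ]

lemma iterate_skewConstaShift_mul_add_one {θ : R → R} {α : R}
    (hθα : ∀ x, θ (α * x) = α * θ x) {q : ℕ} (hθ : θ^[q * n + 1] = id) (c : Fin n → R) :
    (skewConstaShift θ α)^[q * n + 1] c = α ^ q • skewConstaShift id α c := by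
  rw [skewConstaShift_eq_comp, (commute_skewConstaShift_id_piMap hθα).comp_iterate,
    Pi.map_iterate, hθ, Pi.map_id, Function.comp_id, Function.iterate_succ_apply',
    iterate_skewConstaShift_id_mul, skewConstaShift_id_smul]

end ConstaShift

theorem stmt14_general (p m t : ℕ) (hp : p.Prime)
    (F : Type*) [Field F] [Fintype F] (hF : Fintype.card F = p ^ m)
    (R : Type*) [CommRing R] [DecidableEq R] [Algebra F R] (u v : R)
    (hu : u * u = u) (hv : v * v = v)
    (hbij : Function.Bijective (stdForm F R u v))
    (θ : R → R)
    (hθ : ∀ a b c d : F, θ (stdForm F R u v (a, b, c, d)) =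
      stdForm F R u v (a ^ p ^ t, b ^ p ^ t, c ^ p ^ t, d ^ p ^ t))
    -- k is the order of θ
    (k : ℕ) (hk0 : 0 < k) (hkid : θ^[k] = id)
    (α : R) (hαfix : θ α = α) (hα2 : α ^ 2 = 1)
    (n : ℕ) [NeZero n] (hgcd : Nat.gcd n k = 1)
    (C : Submodule R (Fin n → R))
    (hC : skewConstaShift θ α '' (C : Set (Fin n → R)) = C) :
    -- C is classically α-constacyclic
    ∀ c ∈ C, (fun i => (if i = 0 then α else 1) * c (i - 1)) ∈ C := by
  have : Fact p.Prime := ⟨hp⟩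
  have : CharP F p := charP_of_card_eq_prime_pow hF
  have hθmul := map_mul_of_stdForm hu hv hbij.2 (iterateFrobenius F p t) hθ
  have hθα (x : R) : θ (α * x) = α * θ x := by rw [hθmul, hαfix]
  obtain ⟨q, s, hs⟩ := Nat.exists_dvd_mul_add_one_of_coprime hk0 hgcd
  have hθq : θ^[q * n + 1] = id := by rw [hs, Function.iterate_mul, hkid, Function.iterate_id]
  have hτC : Set.MapsTo (skewConstaShift θ α)^[q * n + 1] (C : Set (Fin n → R)) C :=
    (Set.mapsTo_iff_image_subset.2 hC.subset).iterate _
  intro c hc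
  have hαq : α ^ q * α ^ q = 1 := by rw [← pow_add, ← two_mul, pow_mul, hα2, one_pow]
  have hσ : skewConstaShift id α c = α ^ q • (skewConstaShift θ α)^[q * n + 1] c := by
    rw [iterate_skewConstaShift_mul_add_one hθα hθq, smul_smul, hαq, one_smul]
  change skewConstaShift id α c ∈ C
  rw [hσ]
  exact C.smul_mem _ (hτC hc)

theorem stmt14 (p m t : ℕ) (hp : p.Prime) (hodd : p ≠ 2) (ht : 0 < t) (htm : t ∣ m)
    (F : Type*) [Field F] [Fintype F] (hF : Fintype.card F = p ^ m)
    (R : Type*) [CommRing R] [DecidableEq R] [Algebra F R] (u v : R)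
    (hu : u * u = u) (hv : v * v = v)
    (hbij : Function.Bijective (stdForm F R u v))
    (θ : R → R)
    (hθ : ∀ a b c d : F, θ (stdForm F R u v (a, b, c, d)) =
      stdForm F R u v (a ^ p ^ t, b ^ p ^ t, c ^ p ^ t, d ^ p ^ t))
    -- k is the order of θ
    (k : ℕ) (hk0 : 0 < k) (hkid : θ^[k] = id)
    (hkmin : ∀ j : ℕ, 0 < j → j < k → θ^[j] ≠ id)
    (α : R) (hα : IsUnit α) (hαfix : θ α = α) (hα2 : α ^ 2 = 1)
    (n : ℕ) [NeZero n] (hgcd : Nat.gcd n k = 1)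
    (C : Submodule R (Fin n → R))
    (hC : skewConstaShift θ α '' (C : Set (Fin n → R)) = C) :
    -- C is classically α-constacyclic
    ∀ c ∈ C, (fun i => (if i = 0 then α else 1) * c (i - 1)) ∈ C :=
  stmt14_general p m t hp F hF R u v hu hv hbij θ hθ k hk0 hkid α hαfix hα2 n hgcd C hC
end

section
/- The Gray map intertwines the skew α-constacyclic shift and the index-4 skew quasi-twisted shift: Ψ ∘ τ_α = ω₄ ∘ Ψ on Rⁿ, where α is a unit of R whose four F_q-components under the idempotent decomposition are equal (α ∈ F_q ∩ units fixed by θ_t). Consequently, a linear code C over R is skew α-constacyclic if and only if Ψ(C) is a skew quasi-twisted code of length 4n over F_q of index 4. -/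
/-- The Gray map extended to vectors. -/
def grayV {F R : Type*} (Ψ : R → (Fin 4 → F)) {n : ℕ} (x : Fin n → R) :
    Fin 4 × Fin n → F :=
  fun ji => Ψ (x ji.2) ji.1

/-- The index-4 skew quasi-twisted shift `ω₄` on `(F_qⁿ)⁴`, applying the skew
`α`-constacyclic shift (with Frobenius `x ↦ x^(p^t)`) to each of the 4 blocks. -/
def quasiTwist4 {F : Type*} [Monoid F] [DecidableEq F] (p t : ℕ) (α : F) {n : ℕ} [NeZero n]
    (y : Fin 4 × Fin n → F) : Fin 4 × Fin n → F :=
  fun ji => (if ji.2 = 0 then α else 1) * (y (ji.1, ji.2 - 1)) ^ p ^ t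

theorem Function.Semiconj.image_eq_self_iff {α β : Type*} {f : α → β} {ga : α → α}
    {gb : β → β} (h : Function.Semiconj f ga gb) (hf : Function.Injective f) (s : Set α) :
    ga '' s = s ↔ gb '' (f '' s) = f '' s := by
  rw [← h.set_image s, Set.image_eq_image hf]

section GrayMap

variable {F R : Type*} [Field F] [CommRing R] [Algebra F R] {u v : R} {Ψ : R → Fin 4 → F}

theorem stdForm_smul (s : F) (x : F × F × F × F) :
    stdForm F R u v (s • x) = algebraMap F R s * stdForm F R u v x := by
  simp only [stdForm, Prod.smul_fst, Prod.smul_snd, smul_eq_mul, map_mul]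
  ring

variable (hsurj : Function.Surjective (stdForm F R u v))
  (hΨ : ∀ a b c d : F, Ψ (stdForm F R u v (a, b, c, d)) = ![a, a + b, a + c, a + b + c + d])
include hsurj hΨ

theorem gray_algebraMap_mul (s : F) (r : R) : Ψ (algebraMap F R s * r) = s • Ψ r := by
  obtain ⟨⟨a, b, c, d⟩, rfl⟩ := hsurj r
  rw [← stdForm_smul, Prod.smul_mk, Prod.smul_mk, Prod.smul_mk, hΨ, hΨ]
  ext j
  fin_cases j <;> simp <;> ring

theorem gray_apply_of_map_stdForm (σ : F →+ F) {θ : R → R}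
    (hθ : ∀ a b c d : F, θ (stdForm F R u v (a, b, c, d)) = stdForm F R u v (σ a, σ b, σ c, σ d))
    (r : R) : Ψ (θ r) = σ ∘ Ψ r := by
  obtain ⟨⟨a, b, c, d⟩, rfl⟩ := hsurj r
  rw [hθ, hΨ, hΨ]
  ext j
  fin_cases j <;> simp

theorem gray_injective : Function.Injective Ψ := by
  intro r r' h
  obtain ⟨⟨a, b, c, d⟩, rfl⟩ := hsurj r
  obtain ⟨⟨a', b', c', d'⟩, rfl⟩ := hsurj r'
  rw [hΨ, hΨ] at h
  have h0 := congrFun h 0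
  have h1 := congrFun h 1
  have h2 := congrFun h 2
  have h3 := congrFun h 3
  simp only [Matrix.cons_val] at h0 h1 h2 h3
  subst h0
  obtain rfl := add_left_cancel h1
  obtain rfl := add_left_cancel h2
  rw [add_left_cancel h3]

end GrayMap

theorem grayV_injective {F R : Type*} {Ψ : R → Fin 4 → F} (hΨ : Function.Injective Ψ) (n : ℕ) :
    Function.Injective (grayV Ψ (n := n)) :=
  fun _ _ h => funext fun i => hΨ <| funext fun j => congrFun h (j, i)

theorem semiconj_grayV_skewConstaShift {F R : Type*} [Monoid F] [DecidableEq F] [Monoid R]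
    [DecidableEq R] {Ψ : R → Fin 4 → F} {θ : R → R} {p t : ℕ} {a : R} {α : F}
    (hθ : ∀ r j, Ψ (θ r) j = Ψ r j ^ p ^ t) (hα : ∀ r j, Ψ (a * r) j = α * Ψ r j)
    (n : ℕ) [NeZero n] :
    Function.Semiconj (grayV Ψ (n := n)) (skewConstaShift θ a) (quasiTwist4 p t α) := by
  intro x
  funext ⟨j, i⟩
  by_cases hi : i = 0
  · simp [grayV, skewConstaShift, quasiTwist4, hi, hα, hθ]
  · simp [grayV, skewConstaShift, quasiTwist4, hi, hθ]

theorem stmt16_general (p m t : ℕ) (hp : p.Prime)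
    (F : Type*) [Field F] [Fintype F] [DecidableEq F] (hF : Fintype.card F = p ^ m)
    (R : Type*) [CommRing R] [DecidableEq R] [Algebra F R] (u v : R)
    (hbij : Function.Bijective (stdForm F R u v))
    (θ : R → R)
    (hθ : ∀ a b c d : F, θ (stdForm F R u v (a, b, c, d)) =
      stdForm F R u v (a ^ p ^ t, b ^ p ^ t, c ^ p ^ t, d ^ p ^ t))
    (Ψ : R → (Fin 4 → F))
    (hΨ : ∀ a b c d : F,
      Ψ (stdForm F R u v (a, b, c, d)) = ![a, a + b, a + c, a + b + c + d])
    -- α comes from F_q (its four components are equal) and is fixed by the Frobenius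
    (α : F)
    (n : ℕ) [NeZero n] :
    (∀ x : Fin n → R,
      grayV Ψ (skewConstaShift θ (algebraMap F R α) x) = quasiTwist4 p t α (grayV Ψ x)) ∧
    (∀ C : Submodule R (Fin n → R),
      skewConstaShift θ (algebraMap F R α) '' (C : Set (Fin n → R)) = C ↔
        quasiTwist4 p t α '' (grayV Ψ '' (C : Set (Fin n → R))) =
          grayV Ψ '' (C : Set (Fin n → R))) := by
  have : Fact p.Prime := ⟨hp⟩
  have : CharP F p := charP_of_card_eq_prime_pow hF
  have hθΨ (r : R) (j : Fin 4) : Ψ (θ r) j = Ψ r j ^ p ^ t :=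
    congrFun (gray_apply_of_map_stdForm hbij.2 hΨ (iterateFrobenius F p t) hθ r) j
  have hαΨ (r : R) (j : Fin 4) : Ψ (algebraMap F R α * r) j = α * Ψ r j :=
    congrFun (gray_algebraMap_mul hbij.2 hΨ α r) j
  have hsemi := semiconj_grayV_skewConstaShift hθΨ hαΨ n
  exact ⟨hsemi, fun C => hsemi.image_eq_self_iff (grayV_injective (gray_injective hbij.2 hΨ) n) C⟩

theorem stmt16 (p m t : ℕ) (hp : p.Prime) (hodd : p ≠ 2) (ht : 0 < t) (htm : t ∣ m)
    (F : Type*) [Field F] [Fintype F] [DecidableEq F] (hF : Fintype.card F = p ^ m)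
    (R : Type*) [CommRing R] [DecidableEq R] [Algebra F R] (u v : R)
    (hu : u * u = u) (hv : v * v = v)
    (hbij : Function.Bijective (stdForm F R u v))
    (θ : R → R)
    (hθ : ∀ a b c d : F, θ (stdForm F R u v (a, b, c, d)) =
      stdForm F R u v (a ^ p ^ t, b ^ p ^ t, c ^ p ^ t, d ^ p ^ t))
    (Ψ : R → (Fin 4 → F))
    (hΨ : ∀ a b c d : F,
      Ψ (stdForm F R u v (a, b, c, d)) = ![a, a + b, a + c, a + b + c + d])
    -- α comes from F_q (its four components are equal) and is fixed by the Frobenius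
    (α : F) (hα : α ≠ 0) (hαfix : α ^ p ^ t = α)
    (n : ℕ) [NeZero n] :
    (∀ x : Fin n → R,
      grayV Ψ (skewConstaShift θ (algebraMap F R α) x) = quasiTwist4 p t α (grayV Ψ x)) ∧
    (∀ C : Submodule R (Fin n → R),
      skewConstaShift θ (algebraMap F R α) '' (C : Set (Fin n → R)) = C ↔
        quasiTwist4 p t α '' (grayV Ψ '' (C : Set (Fin n → R))) =
          grayV Ψ '' (C : Set (Fin n → R))) :=
  stmt16_general p m t hp F hF R u v hbij θ hθ Ψ hΨ α n
end

section
/- Suppose gcd(n,k) = 1 and gcd(n,q) = 1, where k is the order of θ_t. If C = e₁C₁ ⊕ e₂C₂ ⊕ e₃C₃ ⊕ e₄C₄ is a skew cyclic code of length n over R such that each Cᵢ has an idempotent generator eᵢ(x) in F_q[x;θ_t]/⟨xⁿ-1⟩, then e(x) = e₁e₁(x)+e₂e₂(x)+e₃e₃(x)+e₄e₄(x) is an idempotent element of R[x;θ_t]/⟨xⁿ-1⟩ generating C as a left module. -/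
open Polynomial

/-- Multiplication in the skew polynomial ring `S[x;θ]`. -/
noncomputable def skewMul {S : Type*} [CommRing S] (θ : S → S) (f g : Polynomial S) :
    Polynomial S :=
  ∑ i ∈ f.support, ∑ j ∈ g.support,
    Polynomial.C (f.coeff i * θ^[i] (g.coeff j)) * Polynomial.X ^ (i + j)

/-- Reduction of a skew polynomial modulo `xⁿ - 1`. -/
def redMod {S : Type*} [CommRing S] (n : ℕ) [NeZero n] (f : Polynomial S) : Fin n → S :=
  fun i => ∑ j ∈ f.support.filter (fun j => j % n = (i : ℕ)), f.coeff j

/-- The polynomial of degree `< n` with coefficient vector `c`. -/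
noncomputable def toPoly {S : Type*} [CommRing S] {n : ℕ} (c : Fin n → S) : Polynomial S :=
  ∑ i : Fin n, Polynomial.C (c i) * Polynomial.X ^ (i : ℕ)

/-- Multiplication in the quotient `S[x;θ]/⟨xⁿ-1⟩`, on canonical representatives. -/
noncomputable def quotMul {S : Type*} [CommRing S] (θ : S → S) {n : ℕ} [NeZero n]
    (c d : Fin n → S) : Fin n → S :=
  redMod n (skewMul θ (toPoly c) (toPoly d))

/-- The skew cyclic code (left submodule of `S[x;θ]/⟨xⁿ-1⟩`) generated by the element
with coefficient vector `g`. -/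
noncomputable def skewGenV {S : Type*} [CommRing S] (θ : S → S) {n : ℕ} [NeZero n]
    (g : Fin n → S) : Set (Fin n → S) :=
  {c | ∃ h : Polynomial S, c = redMod n (skewMul θ h (toPoly g))}

/-- The skew cyclic shift `σ` with respect to `θ`. -/
def skewShift {R : Type*} (θ : R → R) {n : ℕ} [NeZero n] (x : Fin n → R) : Fin n → R :=
  fun i => θ (x (i - 1))

/-- The code `e₁C₁ ⊕ e₂C₂ ⊕ e₃C₃ ⊕ e₄C₄` over `R`. -/
def combSet (F R : Type*) [Field F] [CommRing R] [Algebra F R] (u v : R) {n : ℕ}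
    (C₁ C₂ C₃ C₄ : Set (Fin n → F)) : Set (Fin n → R) :=
  {x | ∃ a ∈ C₁, ∃ b ∈ C₂, ∃ c ∈ C₃, ∃ d ∈ C₄, x = fun i =>
    (1 - u - v + u * v) * algebraMap F R (a i) + (u - u * v) * algebraMap F R (b i)
      + (v - u * v) * algebraMap F R (c i) + u * v * algebraMap F R (d i)}

/-!
The idempotents `e₁, …, e₄` identify `R` with the product ring `F⁴`, and `θ` acts on this
product coordinatewise as the Frobenius power `a ↦ a ^ p ^ t`. A ring homomorphism
intertwining two twists commutes with skew multiplication and with reduction modulo `xⁿ - 1`,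
so the four coordinate projections `R → F` turn idempotency of `e(x)`, and membership in the
code it generates, into the same statements for the `eᵢ(x)` over `F`. Conversely, multipliers
`hᵢ(x)` over `F` for the four components glue to the single multiplier `Σ eᵢ hᵢ(x)` over `R`.
-/

section SkewMap

variable {S S' : Type*} [CommRing S] [CommRing S']

theorem skewMul_eq_sum_of_subset {θ : S → S} (h0 : θ 0 = 0) {f g : S[X]} {A B : Finset ℕ}
    (hA : f.support ⊆ A) (hB : g.support ⊆ B) :
    skewMul θ f g = ∑ i ∈ A, ∑ j ∈ B, C (f.coeff i * θ^[i] (g.coeff j)) * X ^ (i + j) := by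
  calc skewMul θ f g
        = ∑ i ∈ f.support, ∑ j ∈ B, C (f.coeff i * θ^[i] (g.coeff j)) * X ^ (i + j) :=
        Finset.sum_congr rfl fun i _ => Finset.sum_subset hB fun j _ hj => by
          simp [notMem_support_iff.mp hj, Function.iterate_fixed h0]
    _ = _ := Finset.sum_subset hA fun i _ hi => by simp [notMem_support_iff.mp hi]

variable (χ : S →+* S') {θ : S → S} {θ' : S' → S'}

theorem map_skewMul (hχ : Function.Semiconj χ θ θ') (h0 : θ' 0 = 0) (f g : S[X]) :
    (skewMul θ f g).map χ = skewMul θ' (f.map χ) (g.map χ) := by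
  have hiter (i : ℕ) (s : S) : χ (θ^[i] s) = θ'^[i] (χ s) := hχ.iterate_right i s
  rw [skewMul_eq_sum_of_subset h0 (support_map_subset χ f) (support_map_subset χ g), skewMul]
  simp only [Polynomial.map_sum, Polynomial.map_mul, Polynomial.map_pow, map_X, map_C, map_mul,
    coeff_map, hiter]

theorem map_redMod (n : ℕ) [NeZero n] (f : S[X]) (i : Fin n) :
    redMod n (f.map χ) i = χ (redMod n f i) := by
  rw [redMod, redMod, map_sum,
    Finset.sum_subset (Finset.filter_subset_filter _ (support_map_subset χ f))]
  · exact Finset.sum_congr rfl fun j _ => coeff_map χ j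
  · intro j hj hnj
    exact notMem_support_iff.mp fun hs =>
      hnj (Finset.mem_filter.mpr ⟨hs, (Finset.mem_filter.mp hj).2⟩)

theorem map_toPoly {n : ℕ} (c : Fin n → S) : (toPoly c).map χ = toPoly (fun i => χ (c i)) := by
  simp only [toPoly, Polynomial.map_sum, Polynomial.map_mul, Polynomial.map_pow, map_X, map_C]

theorem map_redMod_skewMul (hχ : Function.Semiconj χ θ θ') (h0 : θ' 0 = 0) {n : ℕ}
    [NeZero n] (h : S[X]) (c : Fin n → S) (i : Fin n) :
    χ (redMod n (skewMul θ h (toPoly c)) i)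
      = redMod n (skewMul θ' (h.map χ) (toPoly fun j => χ (c j))) i := by
  rw [← map_toPoly, ← map_skewMul χ hχ h0, map_redMod]

theorem map_quotMul (hχ : Function.Semiconj χ θ θ') (h0 : θ' 0 = 0) {n : ℕ} [NeZero n]
    (c d : Fin n → S) (i : Fin n) :
    χ (quotMul θ c d i) = quotMul θ' (fun j => χ (c j)) (fun j => χ (d j)) i := by
  rw [quotMul, map_redMod_skewMul χ hχ h0, map_toPoly]; rfl

end SkewMap

section Coordinates

variable {ι K S : Type*} [CommRing K] [CommRing S] (Ψ : (ι → K) ≃+* S)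

def coordHom (j : ι) : S →+* K := (Pi.evalRingHom (fun _ => K) j).comp Ψ.symm.toRingHom

@[simp]
theorem coordHom_apply (x : ι → K) (j : ι) : coordHom Ψ j (Ψ x) = x j := by
  simp [coordHom]

theorem apply_coordHom (r : S) : Ψ (fun j => coordHom Ψ j r) = r :=
  Ψ.apply_symm_apply r

theorem eq_of_coordHom_eq {r s : S} (h : ∀ j, coordHom Ψ j r = coordHom Ψ j s) : r = s :=
  Ψ.symm.injective (funext h)

theorem exists_map_coordHom_eq [Fintype ι] [DecidableEq ι] (h : ι → K[X]) :
    ∃ H : S[X], ∀ j, H.map (coordHom Ψ j) = h j := by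
  refine ⟨∑ k, C (Ψ (Pi.single k 1)) * (h k).map (Ψ.toRingHom.comp (Pi.constRingHom ι K)),
    fun j => ?_⟩
  have hconst : (coordHom Ψ j).comp (Ψ.toRingHom.comp (Pi.constRingHom ι K)) = RingHom.id K :=
    RingHom.ext fun a => by simp
  simp only [Polynomial.map_sum, Polynomial.map_mul, map_C, Polynomial.map_map, hconst,
    Polynomial.map_id, coordHom_apply, Pi.single_apply]
  simp

variable {θ : S → S} {φ : K → K}

theorem semiconj_coordHom (hθ : ∀ x, θ (Ψ x) = Ψ fun j => φ (x j)) (j : ι) :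
    Function.Semiconj (coordHom Ψ j) θ φ := by
  intro s
  obtain ⟨x, rfl⟩ := Ψ.surjective s
  rw [hθ, coordHom_apply, coordHom_apply]

theorem quotMul_self_eq_self_iff_coordHom (hφ : φ 0 = 0)
    (hθ : ∀ x, θ (Ψ x) = Ψ fun j => φ (x j)) {n : ℕ} [NeZero n] (c : Fin n → S) :
    quotMul θ c c = c ↔ ∀ j, quotMul φ (fun i => coordHom Ψ j (c i))
      (fun i => coordHom Ψ j (c i)) = fun i => coordHom Ψ j (c i) := by
  simp only [funext_iff, ← map_quotMul (coordHom Ψ _) (semiconj_coordHom Ψ hθ _) hφ]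
  exact ⟨fun h j i => by rw [h], fun h i => eq_of_coordHom_eq Ψ fun j => h j i⟩

theorem mem_skewGenV_iff_coordHom [Fintype ι] [DecidableEq ι] (hφ : φ 0 = 0)
    (hθ : ∀ x, θ (Ψ x) = Ψ fun j => φ (x j)) {n : ℕ} [NeZero n] (c g : Fin n → S) :
    c ∈ skewGenV θ g ↔
      ∀ j, (fun i => coordHom Ψ j (c i)) ∈ skewGenV φ fun i => coordHom Ψ j (g i) := by
  have hmap (H : S[X]) (j : ι) (i : Fin n) :=
    map_redMod_skewMul (coordHom Ψ j) (semiconj_coordHom Ψ hθ j) hφ H g i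
  constructor
  · rintro ⟨H, rfl⟩ j
    exact ⟨H.map (coordHom Ψ j), funext (hmap H j)⟩
  · intro hc
    choose h hh using hc
    obtain ⟨H, hH⟩ := exists_map_coordHom_eq Ψ h
    refine ⟨H, funext fun i => eq_of_coordHom_eq Ψ fun j => ?_⟩
    rw [hmap, hH]
    exact congrFun (hh j) i

end Coordinates

theorem IsIdempotentElem.peirce_mul {S : Type*} [CommRing S] {e : S} (he : IsIdempotentElem e)
    (a b c d : S) :
    ((1 - e) * a + e * b) * ((1 - e) * c + e * d) = (1 - e) * (a * c) + e * (b * d) := by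
  linear_combination (a - b) * (c - d) * he.eq

def idemToStdCoords (F : Type*) [CommRing F] : (Fin 4 → F) ≃ F × F × F × F where
  toFun x := (x 0, x 1 - x 0, x 2 - x 0, x 0 - x 1 - x 2 + x 3)
  invFun y := ![y.1, y.1 + y.2.1, y.1 + y.2.2.1, y.1 + y.2.1 + y.2.2.1 + y.2.2.2]
  left_inv x := by
    ext j
    fin_cases j <;> simp only [Fin.isValue, Fin.reduceFinMk, Matrix.cons_val] <;> ring
  right_inv y := by
    simp only [Matrix.cons_val]
    ext <;> ring

section IdempotentDecomposition

variable {F R : Type*} [CommRing R] {u v : R}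

def idemHom [CommRing F] [Algebra F R] (hu : IsIdempotentElem u) (hv : IsIdempotentElem v) :
    (Fin 4 → F) →+* R where
  toFun x := (1 - u - v + u * v) * algebraMap F R (x 0) + (u - u * v) * algebraMap F R (x 1)
    + (v - u * v) * algebraMap F R (x 2) + u * v * algebraMap F R (x 3)
  map_one' := by simp only [Pi.one_apply, map_one]; ring
  map_zero' := by simp only [Pi.zero_apply, map_zero]; ring
  map_add' x y := by simp only [Pi.add_apply, map_add]; ring
  map_mul' x y := by
    have hpeirce (x : Fin 4 → F) :
        (1 - u - v + u * v) * algebraMap F R (x 0) + (u - u * v) * algebraMap F R (x 1)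
          + (v - u * v) * algebraMap F R (x 2) + u * v * algebraMap F R (x 3)
        = (1 - v) * ((1 - u) * algebraMap F R (x 0) + u * algebraMap F R (x 1))
          + v * ((1 - u) * algebraMap F R (x 2) + u * algebraMap F R (x 3)) := by ring
    simp only [hpeirce]
    rw [hv.peirce_mul, hu.peirce_mul, hu.peirce_mul]
    simp only [Pi.mul_apply, map_mul]

variable [Field F] [Algebra F R] (hu : IsIdempotentElem u) (hv : IsIdempotentElem v)

theorem idemHom_eq_stdForm_comp :
    ⇑(idemHom hu hv) = stdForm F R u v ∘ idemToStdCoords F := by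
  ext x
  simp only [idemHom, stdForm, idemToStdCoords, RingHom.coe_mk, MonoidHom.coe_mk, OneHom.coe_mk,
    Equiv.coe_fn_mk, Function.comp_apply, map_sub, map_add]
  ring

noncomputable def idemEquiv (hbij : Function.Bijective (stdForm F R u v)) : (Fin 4 → F) ≃+* R :=
  RingEquiv.ofBijective (idemHom hu hv)
    (by rw [idemHom_eq_stdForm_comp]; exact hbij.comp (idemToStdCoords F).bijective)

theorem idemEquiv_frobenius (hbij : Function.Bijective (stdForm F R u v)) {θ : R → R} (p t : ℕ)
    [ExpChar F p] (hθ : ∀ a b c d : F, θ (stdForm F R u v (a, b, c, d)) =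
      stdForm F R u v (a ^ p ^ t, b ^ p ^ t, c ^ p ^ t, d ^ p ^ t)) (x : Fin 4 → F) :
    θ (idemEquiv hu hv hbij x) = idemEquiv hu hv hbij fun j => x j ^ p ^ t := by
  simp only [idemEquiv, RingEquiv.ofBijective_apply, idemHom_eq_stdForm_comp,
    Function.comp_apply, idemToStdCoords, Equiv.coe_fn_mk, hθ, sub_pow_expChar_pow,
    add_pow_expChar_pow]

theorem mem_combSet_iff (hbij : Function.Bijective (stdForm F R u v)) {n : ℕ}
    (C₁ C₂ C₃ C₄ : Set (Fin n → F)) (x : Fin n → R) :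
    x ∈ combSet F R u v C₁ C₂ C₃ C₄ ↔
      ∀ j, (fun i => coordHom (idemEquiv hu hv hbij) j (x i)) ∈ ![C₁, C₂, C₃, C₄] j := by
  constructor
  · rintro ⟨a, ha, b, hb, c, hc, d, hd, rfl⟩ j
    have hx (i : Fin n) : (1 - u - v + u * v) * algebraMap F R (a i)
        + (u - u * v) * algebraMap F R (b i) + (v - u * v) * algebraMap F R (c i)
        + u * v * algebraMap F R (d i) = idemEquiv hu hv hbij ![a i, b i, c i, d i] := rfl
    simp only [hx, coordHom_apply]
    fin_cases j
    exacts [ha, hb, hc, hd]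
  · intro hx
    exact ⟨_, hx 0, _, hx 1, _, hx 2, _, hx 3,
      funext fun i => (apply_coordHom (idemEquiv hu hv hbij) (x i)).symm⟩

end IdempotentDecomposition

theorem stmt19_general (p m t : ℕ) (hp : p.Prime)
    (F : Type*) [Field F] [Fintype F] (hF : Fintype.card F = p ^ m)
    (R : Type*) [CommRing R] [Algebra F R] (u v : R)
    (hu : u * u = u) (hv : v * v = v)
    (hbij : Function.Bijective (stdForm F R u v))
    (θ : R → R)
    (hθ : ∀ a b c d : F, θ (stdForm F R u v (a, b, c, d)) =
      stdForm F R u v (a ^ p ^ t, b ^ p ^ t, c ^ p ^ t, d ^ p ^ t))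
    (n : ℕ) [NeZero n]
    (C : Submodule R (Fin n → R)) (C₁ C₂ C₃ C₄ : Submodule F (Fin n → F))
    (hC : (C : Set (Fin n → R)) = combSet F R u v (C₁ : Set (Fin n → F)) C₂ C₃ C₄)
    -- idempotent generators of C₁,...,C₄ in F_q[x;θ_t]/⟨xⁿ-1⟩
    (g₁ g₂ g₃ g₄ : Fin n → F)
    (hid₁ : quotMul (· ^ p ^ t) g₁ g₁ = g₁) (hid₂ : quotMul (· ^ p ^ t) g₂ g₂ = g₂)
    (hid₃ : quotMul (· ^ p ^ t) g₃ g₃ = g₃) (hid₄ : quotMul (· ^ p ^ t) g₄ g₄ = g₄)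
    (hgen₁ : (C₁ : Set (Fin n → F)) = skewGenV (· ^ p ^ t) g₁)
    (hgen₂ : (C₂ : Set (Fin n → F)) = skewGenV (· ^ p ^ t) g₂)
    (hgen₃ : (C₃ : Set (Fin n → F)) = skewGenV (· ^ p ^ t) g₃)
    (hgen₄ : (C₄ : Set (Fin n → F)) = skewGenV (· ^ p ^ t) g₄) :
    let E : Fin n → R := fun i =>
      (1 - u - v + u * v) * algebraMap F R (g₁ i) + (u - u * v) * algebraMap F R (g₂ i)
        + (v - u * v) * algebraMap F R (g₃ i) + u * v * algebraMap F R (g₄ i)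
    -- E is an idempotent of R[x;θ]/⟨xⁿ-1⟩ generating C
    quotMul θ E E = E ∧ (C : Set (Fin n → R)) = skewGenV θ E := by
  intro E
  have : Fact p.Prime := ⟨hp⟩
  have : CharP F p := charP_of_card_eq_prime_pow hF
  set Ψ := idemEquiv hu hv hbij
  have hθΨ := idemEquiv_frobenius hu hv hbij p t hθ
  have hq0 : (0 : F) ^ p ^ t = 0 := zero_pow (pow_ne_zero t hp.ne_zero)
  have hE (j : Fin 4) : (fun i => coordHom Ψ j (E i)) = ![g₁, g₂, g₃, g₄] j :=
    funext fun i => coordHom_apply Ψ (fun k => ![g₁, g₂, g₃, g₄] k i) j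
  constructor
  · rw [quotMul_self_eq_self_iff_coordHom Ψ hq0 hθΨ]
    intro j
    rw [hE]
    fin_cases j
    exacts [hid₁, hid₂, hid₃, hid₄]
  · ext x
    rw [hC, mem_combSet_iff hu hv hbij, mem_skewGenV_iff_coordHom Ψ hq0 hθΨ]
    refine forall_congr' fun j => ?_
    rw [hE]
    fin_cases j
    exacts [Set.ext_iff.mp hgen₁ _, Set.ext_iff.mp hgen₂ _, Set.ext_iff.mp hgen₃ _,
      Set.ext_iff.mp hgen₄ _]

theorem stmt19 (p m t : ℕ) (hp : p.Prime) (hodd : p ≠ 2) (ht : 0 < t) (htm : t ∣ m)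
    (F : Type*) [Field F] [Fintype F] (hF : Fintype.card F = p ^ m)
    (R : Type*) [CommRing R] [Algebra F R] (u v : R)
    (hu : u * u = u) (hv : v * v = v)
    (hbij : Function.Bijective (stdForm F R u v))
    (θ : R → R)
    (hθ : ∀ a b c d : F, θ (stdForm F R u v (a, b, c, d)) =
      stdForm F R u v (a ^ p ^ t, b ^ p ^ t, c ^ p ^ t, d ^ p ^ t))
    (n : ℕ) [NeZero n]
    -- gcd(n, k) = 1 where k = m / t is the order of θ, and gcd(n, q) = 1
    (hgcdk : Nat.gcd n (m / t) = 1) (hgcdq : Nat.gcd n (p ^ m) = 1)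
    (C : Submodule R (Fin n → R)) (C₁ C₂ C₃ C₄ : Submodule F (Fin n → F))
    (hC : (C : Set (Fin n → R)) = combSet F R u v (C₁ : Set (Fin n → F)) C₂ C₃ C₄)
    (hskew : skewShift θ '' (C : Set (Fin n → R)) = C)
    -- idempotent generators of C₁,...,C₄ in F_q[x;θ_t]/⟨xⁿ-1⟩
    (g₁ g₂ g₃ g₄ : Fin n → F)
    (hid₁ : quotMul (· ^ p ^ t) g₁ g₁ = g₁) (hid₂ : quotMul (· ^ p ^ t) g₂ g₂ = g₂)
    (hid₃ : quotMul (· ^ p ^ t) g₃ g₃ = g₃) (hid₄ : quotMul (· ^ p ^ t) g₄ g₄ = g₄)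
    (hgen₁ : (C₁ : Set (Fin n → F)) = skewGenV (· ^ p ^ t) g₁)
    (hgen₂ : (C₂ : Set (Fin n → F)) = skewGenV (· ^ p ^ t) g₂)
    (hgen₃ : (C₃ : Set (Fin n → F)) = skewGenV (· ^ p ^ t) g₃)
    (hgen₄ : (C₄ : Set (Fin n → F)) = skewGenV (· ^ p ^ t) g₄) :
    let E : Fin n → R := fun i =>
      (1 - u - v + u * v) * algebraMap F R (g₁ i) + (u - u * v) * algebraMap F R (g₂ i)
        + (v - u * v) * algebraMap F R (g₃ i) + u * v * algebraMap F R (g₄ i)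
    -- E is an idempotent of R[x;θ]/⟨xⁿ-1⟩ generating C
    quotMul θ E E = E ∧ (C : Set (Fin n → R)) = skewGenV θ E :=
  stmt19_general p m t hp F hF R u v hu hv hbij θ hθ n C C₁ C₂ C₃ C₄ hC g₁ g₂ g₃ g₄ hid₁ hid₂ hid₃
    hid₄ hgen₁ hgen₂ hgen₃ hgen₄
end
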